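/- arXiv:2008.13035 — 9 statements merged into one kernel-verified Lean document; each statement's English description precedes it below -/
import Mathlib

section
/- Let p, p̃ : [0,1] → ℝ be continuous and strictly positive, let α, β ∈ ℝ, and let λ, λ̃ ∈ ℝ with λ̃ ≠ 0. Let u, ũ : [0,1] → ℝ be twice continuously differentiable, satisfy BC(α,β), be strictly positive on the open interval (0,1), and solve −u''(x) = λ·p(x)·u(x) and −ũ''(x) = λ̃·p̃(x)·ũ(x) on [0,1]. If λ = λ̃ · max_{x ∈ [0,1]} ( p̃(x)/p(x) ), then λ ≠ 0 and p(x) = (λ̃/λ)·p̃(x) for all x ∈ [0,1]. -/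
/-!
The Wronskian `W = u ũ' - u' ũ` satisfies `W' = u ũ (λ p - λ̃ p̃) = λ̃ u ũ (M p - p̃)` with
`M = max p̃ / p`, so `W'` has the constant sign of `λ̃` on `(0,1)`. Common separated boundary
conditions make `W` vanish at `0` and `1`, so `W` is constant and `W' = 0`; as `u ũ > 0` on `(0,1)`
this forces `λ p = λ̃ p̃` there, and on `[0,1]` by continuity.
-/

open Real

def BC (α β : ℝ) (w : ℝ → ℝ) : Prop :=
  w 0 * Real.cos α + deriv w 0 * Real.sin α = 0 ∧
  w 1 * Real.cos β + deriv w 1 * Real.sin β = 0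

open Set

theorem eq_zero_of_hasDerivAt_nonneg_of_eq {f f' : ℝ → ℝ} {a b : ℝ}
    (hf : ContinuousOn f (Icc a b)) (hderiv : ∀ x ∈ Ioo a b, HasDerivAt f (f' x) x)
    (hnonneg : ∀ x ∈ Ioo a b, 0 ≤ f' x) (hab : f a = f b) :
    ∀ x ∈ Ioo a b, f' x = 0 := by
  have hmono : MonotoneOn f (Icc a b) :=
    monotoneOn_of_hasDerivWithinAt_nonneg (convex_Icc a b) hf
      (by simpa only [interior_Icc] using fun x hx ↦ (hderiv x hx).hasDerivWithinAt)
      (by simpa only [interior_Icc] using hnonneg)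
  have hconst : EqOn f (fun _ ↦ f a) (Ioo a b) := fun y hy ↦
    le_antisymm
      (hab ▸ hmono (Ioo_subset_Icc_self hy) (right_mem_Icc.2 (hy.1.trans hy.2).le) hy.2.le)
      (hmono (left_mem_Icc.2 (hy.1.trans hy.2).le) (Ioo_subset_Icc_self hy) hy.1.le)
  intro x hx
  exact (hderiv x hx).unique ((hasDerivAt_const x (f a)).congr_of_eventuallyEq
    (hconst.eventuallyEq_of_mem (isOpen_Ioo.mem_nhds hx)))

noncomputable def wronskian (u v : ℝ → ℝ) (x : ℝ) : ℝ := u x * deriv v x - deriv u x * v x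

theorem hasDerivAt_wronskian {u v : ℝ → ℝ} {x : ℝ}
    (hu : DifferentiableAt ℝ u x) (hv : DifferentiableAt ℝ v x)
    (hu' : DifferentiableAt ℝ (deriv u) x) (hv' : DifferentiableAt ℝ (deriv v) x) :
    HasDerivAt (wronskian u v) (u x * deriv (deriv v) x - deriv (deriv u) x * v x) x :=
  ((hu.hasDerivAt.mul hv'.hasDerivAt).sub (hu'.hasDerivAt.mul hv.hasDerivAt)).congr_deriv
    (by ring)

theorem ContDiff.continuous_wronskian {u v : ℝ → ℝ} (hu : ContDiff ℝ 1 u) (hv : ContDiff ℝ 1 v) :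
    Continuous (wronskian u v) :=
  (hu.continuous.mul (hv.continuous_deriv le_rfl)).sub
    ((hu.continuous_deriv le_rfl).mul hv.continuous)

-- `(cos θ, sin θ) ≠ 0` lies in the kernel of the matrix `!![a, a'; b, b']`.
theorem mul_sub_mul_eq_zero_of_cos_sin {a a' b b' θ : ℝ}
    (ha : a * cos θ + a' * sin θ = 0) (hb : b * cos θ + b' * sin θ = 0) :
    a * b' - a' * b = 0 := by
  linear_combination (cos θ * b' - sin θ * b) * ha + (sin θ * a - cos θ * a') * hb -
    (a * b' - a' * b) * sin_sq_add_cos_sq θ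

theorem BC.wronskian_eq_zero {α β : ℝ} {u v : ℝ → ℝ} (hu : BC α β u) (hv : BC α β v) :
    wronskian u v 0 = 0 ∧ wronskian u v 1 = 0 :=
  ⟨mul_sub_mul_eq_zero_of_cos_sin hu.1 hv.1, mul_sub_mul_eq_zero_of_cos_sin hu.2 hv.2⟩

theorem eqOn_of_sturm_comparison {α β : ℝ} {u v q r : ℝ → ℝ}
    (hu : ContDiff ℝ 2 u) (hv : ContDiff ℝ 2 v) (hbcu : BC α β u) (hbcv : BC α β v)
    (hupos : ∀ x ∈ Ioo (0 : ℝ) 1, 0 < u x) (hvpos : ∀ x ∈ Ioo (0 : ℝ) 1, 0 < v x)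
    (hodeu : ∀ x ∈ Ioo (0 : ℝ) 1, -deriv (deriv u) x = q x * u x)
    (hodev : ∀ x ∈ Ioo (0 : ℝ) 1, -deriv (deriv v) x = r x * v x)
    (hqr : ∀ x ∈ Ioo (0 : ℝ) 1, q x ≤ r x) :
    EqOn q r (Ioo 0 1) := by
  have hW' : ∀ x ∈ Ioo (0 : ℝ) 1,
      HasDerivAt (wronskian v u) (v x * u x * (r x - q x)) x := by
    intro x hx
    convert hasDerivAt_wronskian (hv.differentiable two_ne_zero x) (hu.differentiable two_ne_zero x)
      (hv.differentiable_deriv_two x) (hu.differentiable_deriv_two x) using 1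
    linear_combination v x * hodeu x hx - u x * hodev x hx
  have hW'_eq_zero := eq_zero_of_hasDerivAt_nonneg_of_eq
    ((hv.of_le one_le_two).continuous_wronskian (hu.of_le one_le_two)).continuousOn hW'
    (fun x hx ↦ mul_nonneg (mul_pos (hvpos x hx) (hupos x hx)).le (sub_nonneg.2 (hqr x hx)))
    ((hbcv.wronskian_eq_zero hbcu).1.trans (hbcv.wronskian_eq_zero hbcu).2.symm)
  intro x hx
  exact (sub_eq_zero.1 ((mul_eq_zero.1 (hW'_eq_zero x hx)).resolve_left
    (mul_pos (hvpos x hx) (hupos x hx)).ne')).symm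

/-- The 'max' half of Theorem 2.1: first-eigenvalue Ambarzumyan-type theorem. -/
theorem stmt_1 (p pt : ℝ → ℝ) (hp : Continuous p) (hpt : Continuous pt)
    (hppos : ∀ x ∈ Set.Icc (0:ℝ) 1, 0 < p x)
    (hptpos : ∀ x ∈ Set.Icc (0:ℝ) 1, 0 < pt x)
    (α β : ℝ) (l lt : ℝ) (hlt : lt ≠ 0) (u ut : ℝ → ℝ)
    (hu : ContDiff ℝ 2 u) (hut : ContDiff ℝ 2 ut)
    (hbc : BC α β u) (htbc : BC α β ut)
    (hupos : ∀ x ∈ Set.Ioo (0:ℝ) 1, 0 < u x)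
    (hutpos : ∀ x ∈ Set.Ioo (0:ℝ) 1, 0 < ut x)
    (hode : ∀ x ∈ Set.Icc (0:ℝ) 1, -(deriv (deriv u) x) = l * p x * u x)
    (htode : ∀ x ∈ Set.Icc (0:ℝ) 1, -(deriv (deriv ut) x) = lt * pt x * ut x)
    (M : ℝ) (hM : IsGreatest ((fun x => pt x / p x) '' Set.Icc (0:ℝ) 1) M)
    (hl : l = lt * M) :
    l ≠ 0 ∧ ∀ x ∈ Set.Icc (0:ℝ) 1, p x = (lt / l) * pt x := by
  obtain ⟨⟨x₀, hx₀, hMx₀⟩, hmax⟩ := hM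
  have hM0 : 0 < M := hMx₀ ▸ div_pos (hptpos x₀ hx₀) (hppos x₀ hx₀)
  have hl0 : l ≠ 0 := hl ▸ mul_ne_zero hlt hM0.ne'
  have hpt_le : ∀ x ∈ Icc (0 : ℝ) 1, pt x ≤ M * p x := fun x hx ↦
    (div_le_iff₀ (hppos x hx)).1 (hmax ⟨x, hx, rfl⟩)
  have hode' : ∀ x ∈ Ioo (0 : ℝ) 1, -deriv (deriv u) x = l * p x * u x :=
    fun x hx ↦ hode x (Ioo_subset_Icc_self hx)
  have htode' : ∀ x ∈ Ioo (0 : ℝ) 1, -deriv (deriv ut) x = lt * pt x * ut x :=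
    fun x hx ↦ htode x (Ioo_subset_Icc_self hx)
  have hIoo : EqOn (fun x ↦ l * p x) (fun x ↦ lt * pt x) (Ioo 0 1) := by
    rcases hlt.lt_or_gt with hneg | hpos
    · refine eqOn_of_sturm_comparison hu hut hbc htbc hupos hutpos hode' htode' fun x hx ↦ ?_
      rw [hl, mul_assoc]
      exact mul_le_mul_of_nonpos_left (hpt_le x (Ioo_subset_Icc_self hx)) hneg.le
    · refine (eqOn_of_sturm_comparison hut hu htbc hbc hutpos hupos htode' hode'
        fun x hx ↦ ?_).symm
      rw [hl, mul_assoc]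
      exact mul_le_mul_of_nonneg_left (hpt_le x (Ioo_subset_Icc_self hx)) hpos.le
  have hIcc : EqOn (fun x ↦ l * p x) (fun x ↦ lt * pt x) (Icc 0 1) :=
    closure_Ioo (zero_ne_one' ℝ) ▸ hIoo.closure (by fun_prop) (by fun_prop)
  refine ⟨hl0, fun x hx ↦ ?_⟩
  rw [div_mul_eq_mul_div, eq_div_iff hl0]
  linear_combination hIcc hx
end

section
/- Let p : [0,1] → ℝ be continuous and strictly positive, let λ ∈ ℝ, and let u : [0,1] → ℝ be twice continuously differentiable with u(0) = u(1) = 0, u strictly positive on (0,1), and −u''(x) = λ·p(x)·u(x) for all x ∈ [0,1]. If λ = π² · max_{x ∈ [0,1]} ( 1/p(x) ), then λ ≠ 0 and p(x) = π²/λ for all x ∈ [0,1] (so p is constant). -/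
open Real Set

/-!
Compare `u` with the first Dirichlet eigenfunction `sin (π x)` of the constant density through
their Wronskian `W = u' sin (π x) - u π cos (π x)`, whose derivative is `(u'' + π² u) sin (π x)`.
The choice `λ = π² max (1 / p)` gives `λ p ≥ π²`, so `u'' + π² u = -(λ p - π²) u ≤ 0` and `W` is
antitone on `[0, 1]`. Since `W` vanishes at both endpoints, `W ≡ 0`, hence `u'' + π² u = 0`,
i.e. `(λ p - π²) u = 0`; positivity of `u` forces `λ p = π²` inside, and continuity of `p`
extends this to `[0, 1]`.
-/

noncomputable def wronskianSin (ω : ℝ) (u : ℝ → ℝ) (x : ℝ) : ℝ :=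
  deriv u x * sin (ω * x) - u x * (ω * cos (ω * x))

theorem hasDerivAt_wronskianSin {u : ℝ → ℝ} {x : ℝ} (ω : ℝ) (hu : DifferentiableAt ℝ u x)
    (hu' : DifferentiableAt ℝ (deriv u) x) :
    HasDerivAt (wronskianSin ω u) ((deriv (deriv u) x + ω ^ 2 * u x) * sin (ω * x)) x := by
  have hlin : HasDerivAt (fun y => ω * y) ω x := by
    simpa using (hasDerivAt_id x).const_mul ω
  have hsin : HasDerivAt (fun y => sin (ω * y)) (cos (ω * x) * ω) x :=
    (hasDerivAt_sin (ω * x)).comp x hlin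
  have hcos : HasDerivAt (fun y => ω * cos (ω * y)) (ω * (-sin (ω * x) * ω)) x :=
    ((hasDerivAt_cos (ω * x)).comp x hlin).const_mul ω
  exact (hu'.hasDerivAt.mul hsin).sub (hu.hasDerivAt.mul hcos) |>.congr_deriv (by ring)

theorem sin_pi_mul_pos {x : ℝ} (hx : x ∈ Ioo (0 : ℝ) 1) : 0 < sin (π * x) :=
  sin_pos_of_pos_of_lt_pi (mul_pos pi_pos hx.1) (by nlinarith [hx.2, pi_pos])

theorem deriv_deriv_add_pi_sq_mul_eq_zero_of_nonpos {u : ℝ → ℝ} (hu : Differentiable ℝ u)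
    (hu' : Differentiable ℝ (deriv u)) (hu0 : u 0 = 0) (hu1 : u 1 = 0)
    (hle : ∀ x ∈ Ioo (0 : ℝ) 1, deriv (deriv u) x + π ^ 2 * u x ≤ 0) :
    ∀ x ∈ Ioo (0 : ℝ) 1, deriv (deriv u) x + π ^ 2 * u x = 0 := by
  set W := wronskianSin π u
  have hW (x : ℝ) := hasDerivAt_wronskianSin π (hu x) (hu' x)
  have hWanti : AntitoneOn W (Icc 0 1) := by
    refine antitoneOn_of_hasDerivWithinAt_nonpos (convex_Icc 0 1)
      (fun x _ => (hW x).continuousAt.continuousWithinAt) (fun x _ => (hW x).hasDerivWithinAt) ?_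
    rw [interior_Icc]
    exact fun x hx => mul_nonpos_of_nonpos_of_nonneg (hle x hx) (sin_pi_mul_pos hx).le
  have hW0 : W 0 = 0 := by simp [W, wronskianSin, hu0]
  have hW1 : W 1 = 0 := by simp [W, wronskianSin, hu1]
  have hWzero : EqOn W 0 (Ioo 0 1) := fun x hx => by
    have hle0 := hWanti (left_mem_Icc.2 zero_le_one) (Ioo_subset_Icc_self hx) hx.1.le
    have hge1 := hWanti (Ioo_subset_Icc_self hx) (right_mem_Icc.2 zero_le_one) hx.2.le
    simp only [Pi.zero_apply]
    linarith
  intro x hx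
  have hW'x : (deriv (deriv u) x + π ^ 2 * u x) * sin (π * x) = 0 :=
    (hW x).unique <| (hasDerivAt_const x (0 : ℝ)).congr_of_eventuallyEq <|
      Filter.eventuallyEq_of_mem (isOpen_Ioo.mem_nhds hx) hWzero
  exact (mul_eq_zero.1 hW'x).resolve_right (sin_pi_mul_pos hx).ne'

/-- Dirichlet corollary of the 'max' Ambarzumyan-type theorem with
comparison density p̃ ≡ 1 (lowest Dirichlet eigenvalue π²). -/
theorem stmt_4 (p : ℝ → ℝ) (hp : Continuous p)
    (hppos : ∀ x ∈ Set.Icc (0:ℝ) 1, 0 < p x)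
    (l : ℝ) (u : ℝ → ℝ) (hu : ContDiff ℝ 2 u)
    (hu0 : u 0 = 0) (hu1 : u 1 = 0)
    (hupos : ∀ x ∈ Set.Ioo (0:ℝ) 1, 0 < u x)
    (hode : ∀ x ∈ Set.Icc (0:ℝ) 1, -(deriv (deriv u) x) = l * p x * u x)
    (M : ℝ) (hM : IsGreatest ((fun x => 1 / p x) '' Set.Icc (0:ℝ) 1) M)
    (hl : l = Real.pi ^ 2 * M) :
    l ≠ 0 ∧ ∀ x ∈ Set.Icc (0:ℝ) 1, p x = Real.pi ^ 2 / l := by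
  obtain ⟨x₀, hx₀, hx₀M⟩ := hM.1
  have hlpos : 0 < l := hl ▸ mul_pos (by positivity) (hx₀M ▸ one_div_pos.2 (hppos x₀ hx₀))
  have hpi_le (x : ℝ) (hx : x ∈ Icc (0 : ℝ) 1) : π ^ 2 ≤ l * p x := by
    have hMp : 1 ≤ M * p x := (div_le_iff₀ (hppos x hx)).1 (hM.2 ⟨x, hx, rfl⟩)
    calc π ^ 2 ≤ π ^ 2 * (M * p x) := le_mul_of_one_le_right (by positivity) hMp
      _ = l * p x := by rw [hl, mul_assoc]
  have hu2 : ContDiff ℝ (1 + 1) u := hu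
  have hlin (x : ℝ) (hx : x ∈ Ioo (0 : ℝ) 1) :
      deriv (deriv u) x + π ^ 2 * u x = -((l * p x - π ^ 2) * u x) := by
    linear_combination -hode x (Ioo_subset_Icc_self hx)
  have hsol := deriv_deriv_add_pi_sq_mul_eq_zero_of_nonpos (hu2.differentiable (by norm_num))
    ((contDiff_succ_iff_deriv.1 hu2).2.2.differentiable (by norm_num)) hu0 hu1 fun x hx => by
      rw [hlin x hx]
      exact neg_nonpos.2 (mul_nonneg (sub_nonneg.2 (hpi_le x (Ioo_subset_Icc_self hx)))
        (hupos x hx).le)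
  have hinner : EqOn p (fun _ => π ^ 2 / l) (Ioo 0 1) := fun x hx => by
    have hlp := (mul_eq_zero.1 (neg_eq_zero.1 ((hlin x hx).symm.trans (hsol x hx)))).resolve_right
      (hupos x hx).ne'
    rw [eq_div_iff hlpos.ne']
    linarith
  refine ⟨hlpos.ne', fun x hx => ?_⟩
  exact hinner.closure hp continuous_const (by rwa [closure_Ioo zero_ne_one])
end

section
/- Let p : [0,1] → ℝ be continuous and strictly positive, let λ ∈ ℝ, and let u : [0,1] → ℝ be twice continuously differentiable with u(0) = u(1) = 0, u strictly positive on (0,1), and −u''(x) = λ·p(x)·u(x) for all x ∈ [0,1]. If λ = 2π² · ∫₀¹ ( sin²(πx)/p(x) ) dx, then λ > 0 and p(x) = π²/λ for all x ∈ [0,1] (so p is constant). -/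
/-!
Picone's identity: if `u > 0` solves `-u'' = l p u`, then `F = u' φ² / u` satisfies
`F' = φ'² - l p φ² - (φ' - φ u' / u)²`. At a Dirichlet endpoint `u' ≠ 0`, since otherwise
uniqueness for the ODE would force `u ≡ 0`; so `u` vanishes there to first order and `φ²` to
second order, and `F` extends continuously by `0`. Integrating gives the Rayleigh bound
`l ∫ p φ² ≤ ∫ φ'²`, which for `φ = sin (π x)` reads `l ∫ p sin² ≤ π² / 2`. Combined with
`l = 2 π² ∫ sin² / p` and `c = π² / l` this is `∫ sin² (p - c)² / p ≤ 0`, forcing `p = c`.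
-/

open Real Set Filter Topology MeasureTheory intervalIntegral

section Uniqueness

variable {p u : ℝ → ℝ} {a b l : ℝ}

theorem eqOn_zero_of_deriv_eq_zero_left (hp : ContinuousOn p (Icc a b))
    (hu : Differentiable ℝ u) (hu' : Differentiable ℝ (deriv u))
    (hode : ∀ x ∈ Icc a b, -deriv (deriv u) x = l * p x * u x)
    (hua : u a = 0) (hu'a : deriv u a = 0) : EqOn u 0 (Icc a b) := by
  obtain ⟨M, hM⟩ := isCompact_Icc.exists_bound_of_continuousOn hp
  set K := |l| * |M|
  have hK : 0 ≤ K := by positivity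
  have hbound : ∀ t ∈ Ico a b, ‖(deriv u t, deriv (deriv u) t)‖ ≤
      (1 + K) * ‖(u t, deriv u t)‖ := fun t ht => by
    have hpt : |p t| ≤ |M| := (hM t (Ico_subset_Icc_self ht)).trans (le_abs_self M)
    have hu''t : |deriv (deriv u) t| ≤ K * |u t| := by
      rw [← abs_neg, hode t (Ico_subset_Icc_self ht), abs_mul, abs_mul]
      exact mul_le_mul_of_nonneg_right (mul_le_mul_of_nonneg_left hpt (abs_nonneg l))
        (abs_nonneg _)
    simp only [Prod.norm_def, Real.norm_eq_abs]
    have hm : 0 ≤ max |u t| |deriv u t| := (abs_nonneg _).trans (le_max_left _ _)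
    refine max_le ((le_max_right _ _).trans (le_mul_of_one_le_left hm (by linarith))) ?_
    calc |deriv (deriv u) t| ≤ K * max |u t| |deriv u t| :=
          hu''t.trans (mul_le_mul_of_nonneg_left (le_max_left _ _) hK)
      _ ≤ (1 + K) * max |u t| |deriv u t| := by gcongr; linarith
  intro x hx
  exact congrArg Prod.fst <| eq_zero_of_abs_deriv_le_mul_abs_self_of_eq_zero_right
    (hu.continuous.prodMk hu'.continuous).continuousOn
    (fun t _ => ((hu t).hasDerivAt.prodMk (hu' t).hasDerivAt).hasDerivWithinAt)
    (Prod.ext hua hu'a) hbound x hx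

theorem eqOn_zero_of_deriv_eq_zero_right (hp : ContinuousOn p (Icc a b))
    (hu : Differentiable ℝ u) (hu' : Differentiable ℝ (deriv u))
    (hode : ∀ x ∈ Icc a b, -deriv (deriv u) x = l * p x * u x)
    (hub : u b = 0) (hu'b : deriv u b = 0) : EqOn u 0 (Icc a b) := by
  have hneg : ∀ x ∈ Icc (-b) (-a), -x ∈ Icc a b := fun x hx =>
    ⟨by linarith [hx.2], by linarith [hx.1]⟩
  have hderiv : deriv (fun x => u (-x)) = fun x => -deriv u (-x) :=
    funext fun x => deriv_comp_neg ..
  have hderiv2 : ∀ x, deriv (deriv fun x => u (-x)) x = deriv (deriv u) (-x) := fun x => by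
    rw [hderiv, deriv.fun_neg, deriv_comp_neg, neg_neg]
  have hreflected := eqOn_zero_of_deriv_eq_zero_left (p := fun x => p (-x))
    (u := fun x => u (-x)) (l := l) (hp.comp continuousOn_neg hneg) (hu.comp differentiable_neg)
    (by rw [hderiv]; exact (hu'.comp differentiable_neg).neg)
    (fun x hx => by rw [hderiv2]; exact hode (-x) (hneg x hx)) (by simpa using hub)
    (by simpa [hderiv] using hu'b)
  intro x hx
  simpa using hreflected (x := -x) ⟨by linarith [hx.2], by linarith [hx.1]⟩

end Uniqueness

theorem tendsto_div_of_hasDerivAt_of_eq_zero {f g : ℝ → ℝ} {a f' g' : ℝ}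
    (hf : HasDerivAt f f' a) (hg : HasDerivAt g g' a) (hfa : f a = 0) (hga : g a = 0)
    (hg' : g' ≠ 0) : Tendsto (fun x => f x / g x) (𝓝[≠] a) (𝓝 (f' / g')) := by
  refine ((hasDerivAt_iff_tendsto_slope.mp hf).div (hasDerivAt_iff_tendsto_slope.mp hg)
    hg').congr' ?_
  filter_upwards [self_mem_nhdsWithin] with x hx
  have hxa : x - a ≠ 0 := sub_ne_zero.mpr hx
  simp only [Pi.div_apply, slope_def_field, hfa, hga, sub_zero]
  field_simp

theorem hasDerivAt_picone {u v φ : ℝ → ℝ} {x v' φ' : ℝ} (hu : HasDerivAt u (v x) x)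
    (hv : HasDerivAt v v' x) (hφ : HasDerivAt φ φ' x) (hux : u x ≠ 0) :
    HasDerivAt (fun y => v y * φ y ^ 2 / u y)
      (v' * φ x ^ 2 / u x + φ' ^ 2 - (φ' - φ x * v x / u x) ^ 2) x := by
  refine ((hv.fun_mul (hφ.fun_pow 2)).fun_div hu hux).congr_deriv ?_
  field_simp
  ring

theorem mul_integral_mul_sq_le_integral_deriv_sq {p u φ : ℝ → ℝ} {a b l : ℝ} (hab : a < b)
    (hp : ContinuousOn p (Icc a b)) (hu : Differentiable ℝ u) (hu' : Differentiable ℝ (deriv u))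
    (hode : ∀ x ∈ Icc a b, -deriv (deriv u) x = l * p x * u x)
    (hua : u a = 0) (hub : u b = 0) (hupos : ∀ x ∈ Ioo a b, 0 < u x)
    (hφ : ContDiff ℝ 1 φ) (hφa : φ a = 0) (hφb : φ b = 0) :
    l * ∫ x in a..b, p x * φ x ^ 2 ≤ ∫ x in a..b, deriv φ x ^ 2 := by
  set F := fun x => deriv u x * φ x ^ 2 / u x
  have hmid : (a + b) / 2 ∈ Ioo a b := ⟨by linarith, by linarith⟩
  have hu'a : deriv u a ≠ 0 := fun h => (hupos _ hmid).ne'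
    (eqOn_zero_of_deriv_eq_zero_left hp hu hu' hode hua h (Ioo_subset_Icc_self hmid))
  have hu'b : deriv u b ≠ 0 := fun h => (hupos _ hmid).ne'
    (eqOn_zero_of_deriv_eq_zero_right hp hu hu' hode hub h (Ioo_subset_Icc_self hmid))
  have hF_endpoint : ∀ c, u c = 0 → φ c = 0 → deriv u c ≠ 0 → ContinuousAt F c := by
    intro c huc hφc hu'c
    have hφsq : HasDerivAt (fun x => φ x ^ 2) 0 c := by
      simpa [hφc] using ((hφ.differentiable one_ne_zero) c).hasDerivAt.fun_pow 2
    have hlim := ((hu'.continuous.tendsto c).mono_left nhdsWithin_le_nhds).mul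
      (tendsto_div_of_hasDerivAt_of_eq_zero hφsq (hu c).hasDerivAt (by simp [hφc]) huc hu'c)
    rw [← continuousWithinAt_compl_self, ContinuousWithinAt, show F c = 0 by simp [F, huc]]
    simpa [F, mul_div_assoc] using hlim
  have hFcont : ContinuousOn F (Icc a b) := by
    intro x hx
    rcases eq_endpoints_or_mem_Ioo_of_mem_Icc hx with rfl | rfl | hx
    · exact (hF_endpoint x hua hφa hu'a).continuousWithinAt
    · exact (hF_endpoint x hub hφb hu'b).continuousWithinAt
    · exact (((hu'.continuous.mul (hφ.continuous.pow 2)).continuousAt).div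
        hu.continuous.continuousAt (hupos x hx).ne').continuousWithinAt
  have hFderiv : ∀ x ∈ Ioo a b, HasDerivAt F (deriv φ x ^ 2 - l * (p x * φ x ^ 2)
      - (deriv φ x - φ x * deriv u x / u x) ^ 2) x := fun x hx => by
    refine (hasDerivAt_picone (hu x).hasDerivAt (hu' x).hasDerivAt
      ((hφ.differentiable one_ne_zero) x).hasDerivAt (hupos x hx).ne').congr_deriv ?_
    rw [← neg_neg (deriv (deriv u) x), hode x (Ioo_subset_Icc_self hx)]
    field_simp [(hupos x hx).ne']
    ring
  have hcont : ContinuousOn (fun x => l * (p x * φ x ^ 2)) (Icc a b) :=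
    continuousOn_const.mul (hp.mul (hφ.continuous.pow 2).continuousOn)
  have hcont' : Continuous fun x => deriv φ x ^ 2 := (hφ.continuous_deriv le_rfl).pow 2
  have hpicone := sub_le_integral_of_hasDeriv_right_of_le hab.le hFcont
    (fun x hx => (hFderiv x hx).hasDerivWithinAt)
    ((hcont'.continuousOn.sub hcont).integrableOn_Icc)
    (fun x _ => sub_le_self _ (sq_nonneg _))
  simp only [Pi.sub_apply] at hpicone
  rw [integral_sub (hcont'.intervalIntegrable a b) (hcont.intervalIntegrable_of_Icc hab.le),
    intervalIntegral.integral_const_mul] at hpicone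
  have hFab : F b - F a = 0 := by simp [F, hφa, hφb]
  linarith

theorem eqOn_const_of_integral_mul_add_sq_mul_integral_div_le {p s : ℝ → ℝ} {a b c : ℝ}
    (hab : a < b) (hp : ContinuousOn p (Icc a b)) (hppos : ∀ x ∈ Icc a b, 0 < p x)
    (hs : ContinuousOn s (Icc a b)) (hspos : ∀ x ∈ Ioo a b, 0 < s x)
    (h : (∫ x in a..b, p x * s x) + c ^ 2 * (∫ x in a..b, s x / p x) ≤
      2 * c * ∫ x in a..b, s x) :
    EqOn p (fun _ => c) (Icc a b) := by
  have hp0 : ∀ x ∈ Icc a b, p x ≠ 0 := fun x hx => (hppos x hx).ne'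
  set g := fun x => s x * (p x - c) ^ 2 / p x
  have hgcont : ContinuousOn g (Icc a b) :=
    (hs.mul ((hp.sub continuousOn_const).pow 2)).div hp hp0
  have hg_nonneg : 0 ≤ᵐ[volume.restrict (Ioc a b)] g := by
    refine ae_restrict_of_ae_eq_of_ae_restrict Ioo_ae_eq_Ioc ?_
    refine (ae_restrict_mem measurableSet_Ioo).mono fun x hx => ?_
    exact div_nonneg (mul_nonneg (hspos x hx).le (sq_nonneg _))
      (hppos x (Ioo_subset_Icc_self hx)).le
  have hg_integral : ∫ x in a..b, g x =
      (∫ x in a..b, p x * s x) - 2 * c * (∫ x in a..b, s x) + c ^ 2 * ∫ x in a..b, s x / p x := by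
    have hps : IntervalIntegrable (fun x => p x * s x) volume a b :=
      (hp.mul hs).intervalIntegrable_of_Icc hab.le
    have hs' : IntervalIntegrable s volume a b := hs.intervalIntegrable_of_Icc hab.le
    have hsp : IntervalIntegrable (fun x => s x / p x) volume a b :=
      (hs.div hp hp0).intervalIntegrable_of_Icc hab.le
    rw [← intervalIntegral.integral_const_mul, ← intervalIntegral.integral_const_mul,
      ← integral_sub hps (hs'.const_mul (2 * c)),
      ← integral_add (hps.sub (hs'.const_mul (2 * c))) (hsp.const_mul (c ^ 2))]
    refine integral_congr fun x hx => ?_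
    simp only [g]
    field_simp [hp0 x (uIcc_of_le hab.le ▸ hx)]
    ring
  have hg_integral_nonneg : 0 ≤ ∫ x in a..b, g x := by
    rw [integral_of_le hab.le]
    exact integral_nonneg_of_ae hg_nonneg
  have hg_ae_zero : g =ᵐ[volume.restrict (Ioc a b)] 0 :=
    (integral_eq_zero_iff_of_le_of_nonneg_ae hab.le hg_nonneg
      (hgcont.intervalIntegrable_of_Icc hab.le)).mp (by linarith)
  have hg_zero : EqOn g 0 (Ioo a b) := Measure.eqOn_open_of_ae_eq
    (ae_restrict_of_ae_restrict_of_subset Ioo_subset_Ioc_self hg_ae_zero) isOpen_Ioo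
    (hgcont.mono Ioo_subset_Icc_self) continuousOn_const
  refine EqOn.of_subset_closure (s := Ioo a b) (fun x hx => ?_) hp continuousOn_const
    Ioo_subset_Icc_self (closure_Ioo hab.ne).ge
  have hgx := hg_zero hx
  simpa [g, (hspos x hx).ne', hp0 x (Ioo_subset_Icc_self hx), sub_eq_zero] using hgx

theorem integral_sin_pi_mul_sq : ∫ x in (0:ℝ)..1, sin (π * x) ^ 2 = 1 / 2 := by
  rw [integral_comp_mul_left (fun x => sin x ^ 2) pi_ne_zero, integral_sin_sq]
  simp only [mul_zero, mul_one, sin_zero, cos_zero, sin_pi, cos_pi, mul_neg, neg_zero, sub_self,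
    zero_add, sub_zero, smul_eq_mul, one_div]
  field_simp

theorem integral_deriv_sin_pi_mul_sq :
    ∫ x in (0:ℝ)..1, deriv (fun y => sin (π * y)) x ^ 2 = π ^ 2 / 2 := by
  have hderiv : ∀ x, deriv (fun y => sin (π * y)) x = π * cos (π * x) := fun x => by
    simp [mul_comm]
  simp_rw [hderiv, mul_pow, intervalIntegral.integral_const_mul]
  rw [integral_comp_mul_left (fun x => cos x ^ 2) pi_ne_zero, integral_cos_sq]
  simp only [mul_zero, mul_one, sin_zero, cos_zero, sin_pi, cos_pi, sub_self, zero_add, sub_zero,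
    smul_eq_mul]
  field_simp

/-- Dirichlet corollary of the Rayleigh-quotient Ambarzumyan-type theorem with
comparison density p̃ ≡ 1 (lowest Dirichlet eigenvalue π², eigenfunction sin(πx)). -/
theorem stmt_5 (p : ℝ → ℝ) (hp : Continuous p)
    (hppos : ∀ x ∈ Set.Icc (0:ℝ) 1, 0 < p x)
    (l : ℝ) (u : ℝ → ℝ) (hu : ContDiff ℝ 2 u)
    (hu0 : u 0 = 0) (hu1 : u 1 = 0)
    (hupos : ∀ x ∈ Set.Ioo (0:ℝ) 1, 0 < u x)
    (hode : ∀ x ∈ Set.Icc (0:ℝ) 1, -(deriv (deriv u) x) = l * p x * u x)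
    (hl : l = 2 * Real.pi ^ 2 * ∫ x in (0:ℝ)..1, Real.sin (Real.pi * x) ^ 2 / p x) :
    0 < l ∧ ∀ x ∈ Set.Icc (0:ℝ) 1, p x = Real.pi ^ 2 / l := by
  have hsin : ∀ x ∈ Ioo (0:ℝ) 1, 0 < sin (π * x) ^ 2 := fun x hx =>
    pow_pos (sin_pos_of_pos_of_lt_pi (mul_pos pi_pos hx.1) (mul_lt_of_lt_one_right pi_pos hx.2)) 2
  have hweight_pos : 0 < ∫ x in (0:ℝ)..1, sin (π * x) ^ 2 / p x :=
    intervalIntegral_pos_of_pos_on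
      (((by fun_prop : Continuous fun x => sin (π * x) ^ 2).continuousOn.div hp.continuousOn
        fun x hx => (hppos x hx).ne').intervalIntegrable_of_Icc zero_le_one)
      (fun x hx => div_pos (hsin x hx) (hppos x (Ioo_subset_Icc_self hx))) zero_lt_one
  have hl0 : 0 < l := hl ▸ by positivity
  have hrayleigh := mul_integral_mul_sq_le_integral_deriv_sq zero_lt_one hp.continuousOn
    (hu.differentiable two_ne_zero) hu.differentiable_deriv_two hode hu0 hu1 hupos
    (φ := fun x => sin (π * x)) (by fun_prop) (by simp) (by simp)
  rw [integral_deriv_sin_pi_mul_sq] at hrayleigh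
  refine ⟨hl0, eqOn_const_of_integral_mul_add_sq_mul_integral_div_le zero_lt_one hp.continuousOn
    hppos (by fun_prop) hsin ?_⟩
  rw [integral_sin_pi_mul_sq, show ∫ x in (0:ℝ)..1, sin (π * x) ^ 2 / p x = l / (2 * π ^ 2) by
    rw [hl]; field_simp]
  have hB : ∫ x in (0:ℝ)..1, p x * sin (π * x) ^ 2 ≤ π ^ 2 / 2 / l := by
    rw [le_div_iff₀ hl0]
    linarith
  have hsq : (π ^ 2 / l) ^ 2 * (l / (2 * π ^ 2)) = π ^ 2 / 2 / l := by
    field_simp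
  linarith [show 2 * (π ^ 2 / l) * (1 / 2) = π ^ 2 / 2 / l + π ^ 2 / 2 / l by ring]
end

section
/- Let p, p̃ : [0,1] → ℝ be continuous and strictly positive, let λ, λ̃ ∈ ℝ with λ̃ ≠ 0, and let ũ : [0,1] → ℝ be twice continuously differentiable, not identically zero, with −ũ''(x) = λ̃·p̃(x)·ũ(x) for all x ∈ [0,1]. If λ · ∫₀¹ ũ(x)² dx = λ̃ · ∫₀¹ ( p̃(x)/p(x) ) · ũ(x)² dx and λ = λ̃ · max_{x ∈ [0,1]} ( p̃(x)/p(x) ), then λ ≠ 0 and p(x) = (λ̃/λ)·p̃(x) for all x ∈ [0,1]. -/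
/-!
Since `p̃/p ≤ M` on `[0,1]`, the integral identity forces `(M - p̃/p) ũ² = 0` there. Where
`p̃/p < M` (a relatively open set) `ũ` vanishes on a whole interval, so `ũ` and `ũ'` vanish at an
interior point and uniqueness for the linear ODE `ũ'' = -λ̃ p̃ ũ` gives `ũ ≡ 0`, which is excluded.
Hence `p̃/p ≡ M`, i.e. `p = p̃ / M = (λ̃/λ) p̃`.
-/

open Set Filter Topology

lemma lipschitzWith_snd_mul_fst (k : ℝ) :
    LipschitzWith (max 1 ‖k‖₊) (fun z : ℝ × ℝ => (z.2, k * z.1)) := by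
  have h := (LipschitzWith.prod_snd (α := ℝ) (β := ℝ)).prodMk
    ((lipschitzWith_smul (β := ℝ) k).comp LipschitzWith.prod_fst)
  rwa [mul_one] at h

theorem eqOn_of_integral_eq_of_le {f g : ℝ → ℝ} {a b : ℝ} (hab : a < b)
    (hf : ContinuousOn f (Icc a b)) (hg : ContinuousOn g (Icc a b))
    (hle : ∀ x ∈ Icc a b, f x ≤ g x) (heq : ∫ x in a..b, f x = ∫ x in a..b, g x) :
    EqOn f g (Icc a b) := by
  intro x hx
  by_contra hne
  exact heq.not_lt <| intervalIntegral.integral_lt_integral_of_continuousOn_of_le_of_exists_lt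
    hab hf hg (fun y hy => hle y (Ioc_subset_Icc_self hy)) ⟨x, hx, (hle x hx).lt_of_ne hne⟩

section SecondOrderLinear

variable {q u : ℝ → ℝ} {a b : ℝ}

theorem eqOn_zero_of_eq_zero_of_deriv_eq_zero (hq : ContinuousOn q (Icc a b))
    (hu : ContDiff ℝ 2 u) (hode : ∀ x ∈ Ioo a b, deriv (deriv u) x = q x * u x)
    {c : ℝ} (hc : c ∈ Ioo a b) (huc : u c = 0) (hu'c : deriv u c = 0) :
    EqOn u 0 (Icc a b) := by
  obtain ⟨C, hC⟩ := isCompact_Icc.exists_bound_of_continuousOn hq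
  have hlip : ∀ t ∈ Ioo a b,
      LipschitzOnWith (max 1 C.toNNReal) (fun z : ℝ × ℝ => (z.2, q t * z.1)) univ := by
    intro t ht
    refine ((lipschitzWith_snd_mul_fst (q t)).weaken (max_le_max le_rfl ?_)).lipschitzOnWith
    rw [← NNReal.coe_le_coe, coe_nnnorm]
    exact (hC t (Ioo_subset_Icc_self ht)).trans (le_max_left _ _)
  have hu1 : ContDiff ℝ 1 (deriv u) := (contDiff_succ_iff_deriv.mp hu).2.2
  have hsys : ∀ t ∈ Ioo a b,
      HasDerivAt (fun x => (u x, deriv u x)) (deriv u t, q t * u t) t := by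
    intro t ht
    rw [← hode t ht]
    exact (hu.differentiable two_ne_zero t).hasDerivAt.prodMk
      (hu1.differentiable one_ne_zero t).hasDerivAt
  have hzero := ODE_solution_unique_of_mem_Icc hlip hc
    (hu.continuous.prodMk hu1.continuous).continuousOn hsys (fun _ _ => mem_univ _)
    continuousOn_const (fun t _ => by convert hasDerivAt_const t (0 : ℝ × ℝ) using 1; simp)
    (fun _ _ => mem_univ _) (show (u c, deriv u c) = 0 by simp [huc, hu'c])
  exact fun x hx => congrArg Prod.fst (hzero hx)

theorem eqOn_zero_of_vanishes_off_zeros {f : ℝ → ℝ} (hab : a < b)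
    (hq : ContinuousOn q (Icc a b)) (hu : ContDiff ℝ 2 u)
    (hode : ∀ x ∈ Ioo a b, deriv (deriv u) x = q x * u x) (hu0 : ¬ EqOn u 0 (Icc a b))
    (hf : ContinuousOn f (Icc a b)) (hfu : ∀ x ∈ Icc a b, u x ≠ 0 → f x = 0) :
    EqOn f 0 (Icc a b) := by
  have hIoo : EqOn f 0 (Ioo a b) := by
    intro c hc
    by_contra hfc
    have hIcc : Icc a b ∈ 𝓝 c := Icc_mem_nhds hc.1 hc.2
    have hloc : u =ᶠ[𝓝 c] 0 := by
      filter_upwards [(hf.continuousAt hIcc).eventually_ne hfc, hIcc] with x hfx hx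
      by_contra hux
      exact hfx (hfu x hx hux)
    exact hu0 <| eqOn_zero_of_eq_zero_of_deriv_eq_zero hq hu hode hc hloc.eq_of_nhds
      (by simp [hloc.deriv_eq])
  exact hIoo.of_subset_closure hf continuousOn_const Ioo_subset_Icc_self (closure_Ioo hab.ne).ge

end SecondOrderLinear

/-- Theorem 2.3: Ambarzumyan-type theorem for an arbitrary (n-th) eigenvalue
of the vibrating string equation. -/
theorem stmt_6 (p pt : ℝ → ℝ) (hp : Continuous p) (hpt : Continuous pt)
    (hppos : ∀ x ∈ Set.Icc (0:ℝ) 1, 0 < p x)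
    (hptpos : ∀ x ∈ Set.Icc (0:ℝ) 1, 0 < pt x)
    (l lt : ℝ) (hlt : lt ≠ 0) (ut : ℝ → ℝ) (hut : ContDiff ℝ 2 ut)
    (hne : ¬ ∀ x ∈ Set.Icc (0:ℝ) 1, ut x = 0)
    (htode : ∀ x ∈ Set.Icc (0:ℝ) 1, -(deriv (deriv ut) x) = lt * pt x * ut x)
    (hint : l * ∫ x in (0:ℝ)..1, (ut x) ^ 2 =
            lt * ∫ x in (0:ℝ)..1, (pt x / p x) * (ut x) ^ 2)
    (M : ℝ) (hM : IsGreatest ((fun x => pt x / p x) '' Set.Icc (0:ℝ) 1) M)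
    (hl : l = lt * M) :
    l ≠ 0 ∧ ∀ x ∈ Set.Icc (0:ℝ) 1, p x = (lt / l) * pt x := by
  obtain ⟨⟨xM, hxM, hM_eq⟩, hM_max⟩ := hM
  have hM_pos : 0 < M := hM_eq ▸ div_pos (hptpos xM hxM) (hppos xM hxM)
  have hratio : ContinuousOn (fun x => pt x / p x) (Icc 0 1) :=
    hpt.continuousOn.div hp.continuousOn fun x hx => (hppos x hx).ne'
  have hut_sq : Continuous fun x => ut x ^ 2 := hut.continuous.pow 2
  have hint_M : ∫ x in (0:ℝ)..1, pt x / p x * ut x ^ 2 = ∫ x in (0:ℝ)..1, M * ut x ^ 2 := by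
    rw [intervalIntegral.integral_const_mul]
    exact mul_left_cancel₀ hlt (by rw [← hint, hl, mul_assoc])
  have hsq := eqOn_of_integral_eq_of_le zero_lt_one (hratio.mul hut_sq.continuousOn)
    (continuous_const.mul hut_sq).continuousOn
    (fun x hx => mul_le_mul_of_nonneg_right (hM_max ⟨x, hx, rfl⟩) (sq_nonneg _)) hint_M
  have hM_eqOn : EqOn (fun x => M - pt x / p x) 0 (Icc 0 1) :=
    eqOn_zero_of_vanishes_off_zeros zero_lt_one (q := fun x => -(lt * pt x)) (by fun_prop) hut
      (fun x hx => by linarith [htode x (Ioo_subset_Icc_self hx)]) hne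
      (continuousOn_const.sub hratio)
      (fun x hx hux => by simpa [hux, sub_eq_zero, eq_comm] using hsq hx)
  refine ⟨hl ▸ mul_ne_zero hlt hM_pos.ne', fun x hx => ?_⟩
  have hx' : pt x / p x = M := (sub_eq_zero.mp (hM_eqOn hx)).symm
  rw [div_eq_iff (hppos x hx).ne'] at hx'
  rw [hl, hx']
  field_simp
end

section
/- Let q : [0,π] → ℝ be continuous, let μ, ν ∈ ℝ, let γ, δ ∈ ℝ, and let y, z : [0,π] → ℝ be twice continuously differentiable functions, strictly positive on the open interval (0,π), satisfying −y''(x) + q(x)·y(x) = μ·y(x) and −z''(x) = ν·z(x) for all x ∈ [0,π], and both satisfying the boundary conditions w(0)·cos γ + w'(0)·sin γ = 0 and w(π)·cos δ + w'(π)·sin δ = 0. Then min_{x ∈ [0,π]} q(x) ≤ μ − ν ≤ max_{x ∈ [0,π]} q(x). -/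
/-!
Multiplying the two equations crosswise, `(q - (μ - ν)) y z = y'' z - y z''` is the derivative of
the Wronskian-type expression `y' z - y z'`. Separated boundary conditions with the same angle force
this expression to vanish at both endpoints, so `∫₀^π (q - (μ - ν)) y z = 0`. Since `y z > 0` on
`(0, π)`, the factor `q - (μ - ν)` can be neither strictly positive nor strictly negative throughout,
which bounds `μ - ν` by `min q` and `max q`.
-/

open Real Set

lemma mul_sub_mul_eq_zero_of_boundary_condition {γ a b c d : ℝ}
    (h₁ : a * cos γ + b * sin γ = 0) (h₂ : c * cos γ + d * sin γ = 0) : b * c - a * d = 0 := by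
  linear_combination (a * d - b * c) * sin_sq_add_cos_sq γ + sin γ * (c * h₁ - a * h₂) +
    cos γ * (b * h₂ - d * h₁)

section Wronskian

variable {y z : ℝ → ℝ} (hy : ContDiff ℝ 2 y) (hz : ContDiff ℝ 2 z)
include hy hz

lemma hasDerivAt_deriv_mul_sub_mul_deriv (x : ℝ) :
    HasDerivAt (fun x ↦ deriv y x * z x - y x * deriv z x)
      (deriv (deriv y) x * z x - y x * deriv (deriv z) x) x := by
  have hy₁ := (hy.differentiable (by norm_num) x).hasDerivAt
  have hz₁ := (hz.differentiable (by norm_num) x).hasDerivAt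
  have hy₂ := (hy.differentiable_deriv_two x).hasDerivAt
  have hz₂ := (hz.differentiable_deriv_two x).hasDerivAt
  exact ((hy₂.mul hz₁).sub (hy₁.mul hz₂)).congr_deriv (by ring)

lemma integral_deriv_deriv_mul_sub_mul_deriv_deriv (a b : ℝ) :
    ∫ x in a..b, (deriv (deriv y) x * z x - y x * deriv (deriv z) x) =
      (deriv y b * z b - y b * deriv z b) - (deriv y a * z a - y a * deriv z a) := by
  have hy₂ : Continuous (deriv (deriv y)) := (hy.deriv' (n := 1)).continuous_deriv_one
  have hz₂ : Continuous (deriv (deriv z)) := (hz.deriv' (n := 1)).continuous_deriv_one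
  refine intervalIntegral.integral_eq_sub_of_hasDerivAt
    (fun x _ ↦ hasDerivAt_deriv_mul_sub_mul_deriv hy hz x) (Continuous.intervalIntegrable ?_ a b)
  exact (hy₂.mul hz.continuous).sub (hy.continuous.mul hz₂)

end Wronskian

lemma lower_bound_le_of_integral_sub_mul_eq_zero {f w : ℝ → ℝ} {a b c m : ℝ} (hab : a < b)
    (hf : Continuous f) (hw : Continuous w) (hw_pos : ∀ x ∈ Ioo a b, 0 < w x)
    (hm : ∀ x ∈ Ioo a b, m ≤ f x) (hint : ∫ x in a..b, (f x - c) * w x = 0) : m ≤ c := by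
  by_contra! hcm
  have hpos : 0 < ∫ x in a..b, (f x - c) * w x :=
    intervalIntegral.intervalIntegral_pos_of_pos_on
      (((hf.sub continuous_const).mul hw).intervalIntegrable a b)
      (fun x hx ↦ mul_pos (by linarith [hm x hx]) (hw_pos x hx)) hab
  exact hpos.ne' hint

lemma le_upper_bound_of_integral_sub_mul_eq_zero {f w : ℝ → ℝ} {a b c M : ℝ} (hab : a < b)
    (hf : Continuous f) (hw : Continuous w) (hw_pos : ∀ x ∈ Ioo a b, 0 < w x)
    (hM : ∀ x ∈ Ioo a b, f x ≤ M) (hint : ∫ x in a..b, (f x - c) * w x = 0) : c ≤ M := by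
  refine neg_le_neg_iff.mp (lower_bound_le_of_integral_sub_mul_eq_zero hab hf.neg hw hw_pos
    (fun x hx ↦ neg_le_neg (hM x hx)) ?_)
  rw [← neg_eq_zero, ← hint, ← intervalIntegral.integral_neg]
  congr 1 with x
  simp only [Pi.neg_apply]
  ring

/-- Theorem 3.1: the lowest eigenvalue of the Sturm–Liouville problem satisfies
min q ≤ μ₀(q,γ,δ) − μ₀(0,γ,δ) ≤ max q. -/
theorem stmt_7 (q : ℝ → ℝ) (hq : Continuous q)
    (μ ν γ δ : ℝ) (y z : ℝ → ℝ)
    (hy : ContDiff ℝ 2 y) (hz : ContDiff ℝ 2 z)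
    (hypos : ∀ x ∈ Set.Ioo (0:ℝ) Real.pi, 0 < y x)
    (hzpos : ∀ x ∈ Set.Ioo (0:ℝ) Real.pi, 0 < z x)
    (hyode : ∀ x ∈ Set.Icc (0:ℝ) Real.pi,
        -(deriv (deriv y) x) + q x * y x = μ * y x)
    (hzode : ∀ x ∈ Set.Icc (0:ℝ) Real.pi, -(deriv (deriv z) x) = ν * z x)
    (hybc0 : y 0 * Real.cos γ + deriv y 0 * Real.sin γ = 0)
    (hybc1 : y Real.pi * Real.cos δ + deriv y Real.pi * Real.sin δ = 0)
    (hzbc0 : z 0 * Real.cos γ + deriv z 0 * Real.sin γ = 0)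
    (hzbc1 : z Real.pi * Real.cos δ + deriv z Real.pi * Real.sin δ = 0)
    (m M : ℝ) (hm : IsLeast (q '' Set.Icc (0:ℝ) Real.pi) m)
    (hM : IsGreatest (q '' Set.Icc (0:ℝ) Real.pi) M) :
    m ≤ μ - ν ∧ μ - ν ≤ M := by
  have hint : ∫ x in (0)..π, (q x - (μ - ν)) * (y x * z x) = 0 := by
    calc ∫ x in (0)..π, (q x - (μ - ν)) * (y x * z x)
        = ∫ x in (0)..π, (deriv (deriv y) x * z x - y x * deriv (deriv z) x) := by
          refine intervalIntegral.integral_congr fun x hx ↦ ?_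
          rw [uIcc_of_le pi_pos.le] at hx
          linear_combination z x * hyode x hx - y x * hzode x hx
      _ = 0 := by
          rw [integral_deriv_deriv_mul_sub_mul_deriv_deriv hy hz,
            mul_sub_mul_eq_zero_of_boundary_condition hybc0 hzbc0,
            mul_sub_mul_eq_zero_of_boundary_condition hybc1 hzbc1, sub_zero]
  have hyz := hy.continuous.mul hz.continuous
  have hyz_pos : ∀ x ∈ Ioo 0 π, 0 < y x * z x := fun x hx ↦ mul_pos (hypos x hx) (hzpos x hx)
  exact ⟨lower_bound_le_of_integral_sub_mul_eq_zero pi_pos hq hyz hyz_pos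
      (fun x hx ↦ hm.2 ⟨x, Ioo_subset_Icc_self hx, rfl⟩) hint,
    le_upper_bound_of_integral_sub_mul_eq_zero pi_pos hq hyz hyz_pos
      (fun x hx ↦ hM.2 ⟨x, Ioo_subset_Icc_self hx, rfl⟩) hint⟩
end

section
/- Let p : [0,1] → ℝ be continuous and strictly positive, let σ ∈ ℝ with σ ≠ 0, let t ≥ 0 be a real number, and let u : [0,1] → ℝ be twice continuously differentiable with u''(x) = σ²·p(x)·u(x) for all x ∈ [0,1], u strictly positive on (0,1), u(0) + u'(0)·(t + 1) = 0, and u(1) + u'(1)·t = 0. Then a contradiction follows (no such u exists). -/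
open Real

/-- Key lemma in Case 1 of Theorem 3.3: no positive solution of u'' = σ² p u
satisfies u(0) + u'(0)(t+1) = 0 and u(1) + u'(1)t = 0 with t ≥ 0. -/
theorem stmt_12 (p : ℝ → ℝ) (hp : Continuous p)
    (hppos : ∀ x ∈ Set.Icc (0:ℝ) 1, 0 < p x)
    (σ : ℝ) (hσ : σ ≠ 0) (t : ℝ) (ht : 0 ≤ t) (u : ℝ → ℝ)
    (hu : ContDiff ℝ 2 u)
    (hode : ∀ x ∈ Set.Icc (0:ℝ) 1, deriv (deriv u) x = σ ^ 2 * p x * u x)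
    (hupos : ∀ x ∈ Set.Ioo (0:ℝ) 1, 0 < u x)
    (hbc0 : u 0 + deriv u 0 * (t + 1) = 0)
    (hbc1 : u 1 + deriv u 1 * t = 0) :
    False := by
  have h2 : ContDiff ℝ (1+1) u := by exact_mod_cast hu
  have hd1 : Differentiable ℝ u := (contDiff_succ_iff_deriv.mp h2).1
  have h1 : ContDiff ℝ 1 (deriv u) := (contDiff_succ_iff_deriv.mp h2).2.2
  have h1' : ContDiff ℝ (0+1) (deriv u) := by exact_mod_cast h1
  have hd2 : Differentiable ℝ (deriv u) := (contDiff_succ_iff_deriv.mp h1').1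
  have hc2 : Continuous (deriv (deriv u)) := (contDiff_succ_iff_deriv.mp h1').2.2.continuous
  have hc1 : Continuous (deriv u) := hd2.continuous
  set f := deriv (deriv u) with hf
  have hfpos : ∀ x ∈ Set.Ioo (0:ℝ) 1, 0 < f x := by
    intro x hx
    rw [hode x (Set.Ioo_subset_Icc_self hx)]
    have hσ2 : 0 < σ ^ 2 := by positivity
    exact mul_pos (mul_pos hσ2 (hppos x (Set.Ioo_subset_Icc_self hx))) (hupos x hx)
  have ha : deriv u 1 - deriv u 0 = ∫ x in (0:ℝ)..1, f x :=
    (intervalIntegral.integral_deriv_eq_sub (fun x _ => hd2 x)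
      (hc2.intervalIntegrable 0 1)).symm
  have hapos : 0 < deriv u 1 - deriv u 0 := by
    rw [ha]
    exact intervalIntegral.intervalIntegral_pos_of_pos_on (hc2.intervalIntegrable 0 1)
      hfpos one_pos
  have hhpos : ∀ s ∈ Set.Ioo (0:ℝ) 1, 0 < deriv u s - deriv u 0 := by
    intro s hs
    have heq : deriv u s - deriv u 0 = ∫ x in (0:ℝ)..s, f x :=
      (intervalIntegral.integral_deriv_eq_sub (fun x _ => hd2 x)
        (hc2.intervalIntegrable 0 s)).symm
    rw [heq]
    exact intervalIntegral.intervalIntegral_pos_of_pos_on (hc2.intervalIntegrable 0 s)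
      (fun x hx => hfpos x ⟨hx.1, hx.2.trans hs.2⟩) hs.1
  have hb : u 1 - u 0 - deriv u 0 = ∫ s in (0:ℝ)..1, (deriv u s - deriv u 0) := by
    rw [intervalIntegral.integral_sub (hc1.intervalIntegrable 0 1)
        (intervalIntegrable_const),
      intervalIntegral.integral_deriv_eq_sub (fun x _ => hd1 x)
        (hc1.intervalIntegrable 0 1)]
    simp
  have hbpos : 0 < u 1 - u 0 - deriv u 0 := by
    rw [hb]
    exact intervalIntegral.intervalIntegral_pos_of_pos_on
      ((hc1.sub continuous_const).intervalIntegrable 0 1) hhpos one_pos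
  nlinarith [mul_nonneg ht hapos.le]
end

section
/- Let α ∈ [π/4, π] and β ∈ [0, 3π/4] with cos α · cos β − sin(α − β) = 0. Let p : [0,1] → ℝ be continuous and strictly positive, let σ ∈ ℝ with σ ≠ 0, and let u : [0,1] → ℝ be twice continuously differentiable with u''(x) = σ²·p(x)·u(x) for all x ∈ [0,1], u strictly positive on (0,1), and u satisfying BC(α,β). Then a contradiction follows (no such u exists). -/
open Real

/-!
The function `w x = sin α - x cos α` is the zero-eigenvalue solution of the boundary condition at
`0`; the curve condition says exactly that it also satisfies the boundary condition at `1`, and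
`α ∈ [π/4, π]` makes it positive on `(0, 1)`. Since `u` and `w` satisfy the same separated boundary
conditions, their Wronskian vanishes at both endpoints, so Lagrange's identity gives
`∫₀¹ u'' w = 0`. But `u'' w = σ² p u w > 0` on `(0, 1)`.
-/

open Set intervalIntegral MeasureTheory

theorem integral_deriv2_mul_sub_mul_deriv2 {u u' u'' w w' w'' : ℝ → ℝ} {a b : ℝ}
    (hu : ∀ x ∈ uIcc a b, HasDerivAt u (u' x) x) (hu' : ∀ x ∈ uIcc a b, HasDerivAt u' (u'' x) x)
    (hw : ∀ x ∈ uIcc a b, HasDerivAt w (w' x) x) (hw' : ∀ x ∈ uIcc a b, HasDerivAt w' (w'' x) x)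
    (hint : IntervalIntegrable (fun x => u'' x * w x - u x * w'' x) volume a b) :
    ∫ x in a..b, (u'' x * w x - u x * w'' x) =
      (u' b * w b - u b * w' b) - (u' a * w a - u a * w' a) := by
  refine integral_eq_sub_of_hasDerivAt (f := fun x => u' x * w x - u x * w' x)
    (fun x hx => ?_) hint
  exact ((hu' x hx).mul (hw x hx) |>.sub <| (hu x hx).mul (hw' x hx)).congr_deriv (by ring)

theorem wronskian_eq_zero_of_cos_sin {θ a a' b b' : ℝ}
    (ha : a * cos θ + a' * sin θ = 0) (hb : b * cos θ + b' * sin θ = 0) :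
    a' * b - a * b' = 0 := by
  linear_combination -(a' * b - a * b') * sin_sq_add_cos_sq θ + cos θ * (a' * hb - b' * ha)
    + sin θ * (b * ha - a * hb)

theorem sin_sub_mul_cos_pos {α x : ℝ} (hα : α ∈ Icc (π / 4) π) (hx : x ∈ Ioo (0 : ℝ) 1) :
    0 < sin α - x * cos α := by
  obtain ⟨hα₁, hα₂⟩ := hα
  obtain ⟨hx₀, hx₁⟩ := hx
  have hsin : 0 ≤ sin α := sin_nonneg_of_nonneg_of_le_pi (by linarith [pi_pos]) hα₂
  have hsin_sub_cos : 0 ≤ sin α - cos α := by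
    have h := sin_nonneg_of_nonneg_of_le_pi (x := α - π / 4) (by linarith) (by linarith)
    rw [sin_sub, cos_pi_div_four, sin_pi_div_four] at h
    nlinarith [sqrt_pos.mpr (show (0 : ℝ) < 2 by norm_num)]
  rcases hsin.lt_or_eq with hsin | hsin
  · nlinarith [mul_nonneg hx₀.le hsin_sub_cos, mul_pos (sub_pos.mpr hx₁) hsin]
  · have hcos : cos α = -1 := by nlinarith [sin_sq_add_cos_sq α]
    rw [← hsin, hcos]
    linarith

theorem stmt_13_general (α β : ℝ)
    (hα : α ∈ Set.Icc (Real.pi / 4) Real.pi)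
    (hcurve : Real.cos α * Real.cos β - Real.sin (α - β) = 0)
    (p : ℝ → ℝ)
    (hppos : ∀ x ∈ Set.Icc (0:ℝ) 1, 0 < p x)
    (σ : ℝ) (hσ : σ ≠ 0) (u : ℝ → ℝ) (hu : ContDiff ℝ 2 u)
    (hode : ∀ x ∈ Set.Icc (0:ℝ) 1, deriv (deriv u) x = σ ^ 2 * p x * u x)
    (hupos : ∀ x ∈ Set.Ioo (0:ℝ) 1, 0 < u x)
    (hbc : BC α β u) :
    False := by
  set w : ℝ → ℝ := fun x => sin α - x * cos α
  have hw : ∀ x, HasDerivAt w (-cos α) x := fun x => by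
    simpa using (hasDerivAt_mul_const (cos α) (x := x)).const_sub (sin α)
  have hu'' : Continuous (deriv (deriv u)) := (hu.iterate_deriv' 1 1).continuous_deriv le_rfl
  have hint : IntervalIntegrable (fun x => deriv (deriv u) x * w x - u x * 0) volume 0 1 :=
    ((hu''.mul (by fun_prop)).sub (by fun_prop)).intervalIntegrable 0 1
  have hlagrange := integral_deriv2_mul_sub_mul_deriv2
    (fun x _ => (hu.differentiable two_ne_zero x).hasDerivAt)
    (fun x _ => (hu.differentiable_deriv_two x).hasDerivAt) (fun x _ => hw x)
    (fun x _ => hasDerivAt_const x (-cos α)) hint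
  have hwronskian₀ := wronskian_eq_zero_of_cos_sin hbc.1
    (show w 0 * cos α + (-cos α) * sin α = 0 by simp only [w]; ring)
  have hwronskian₁ := wronskian_eq_zero_of_cos_sin hbc.2
    (show w 1 * cos β + (-cos α) * sin β = 0 by simp only [w]; linarith [sin_sub α β])
  have hpos : 0 < ∫ x in (0:ℝ)..1, (deriv (deriv u) x * w x - u x * 0) := by
    refine intervalIntegral_pos_of_pos_on hint (fun x hx => ?_) one_pos
    rw [hode x (Ioo_subset_Icc_self hx), mul_zero, sub_zero]
    have hpx := hppos x (Ioo_subset_Icc_self hx)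
    have hux := hupos x hx
    have hwx := sin_sub_mul_cos_pos hα hx
    positivity
  linarith

/-- Core of Theorem 3.3, first case: on the curve cos α cos β − sin(α−β) = 0
there is no negative eigenvalue with positive eigenfunction. -/
theorem stmt_13 (α β : ℝ)
    (hα : α ∈ Set.Icc (Real.pi / 4) Real.pi)
    (hβ : β ∈ Set.Icc (0:ℝ) (3 * Real.pi / 4))
    (hcurve : Real.cos α * Real.cos β - Real.sin (α - β) = 0)
    (p : ℝ → ℝ) (hp : Continuous p)
    (hppos : ∀ x ∈ Set.Icc (0:ℝ) 1, 0 < p x)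
    (σ : ℝ) (hσ : σ ≠ 0) (u : ℝ → ℝ) (hu : ContDiff ℝ 2 u)
    (hode : ∀ x ∈ Set.Icc (0:ℝ) 1, deriv (deriv u) x = σ ^ 2 * p x * u x)
    (hupos : ∀ x ∈ Set.Ioo (0:ℝ) 1, 0 < u x)
    (hbc : BC α β u) :
    False :=
  stmt_13_general α β hα hcurve p hppos σ hσ u hu hode hupos hbc
end

section
/- Let σ > 0 be a real number and let α, β ∈ ℝ satisfy sin α · sin β ≥ 0, cos α · cos β − sin(α − β) < 0, and (cos α · cos β ≥ 0 or sin(α − β) ≥ 0). Then −cos α · cos β · sinh σ + sin(α − β) · σ · cosh σ + sin α · sin β · σ² · sinh σ > 0. -/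
open Real

lemma sinh_le_mul_cosh {x : ℝ} (hx : 0 ≤ x) : Real.sinh x ≤ x * Real.cosh x := by
  have key : MonotoneOn (fun x : ℝ => x * Real.cosh x - Real.sinh x) (Set.Ici 0) := by
    apply monotoneOn_of_deriv_nonneg (convex_Ici 0)
    · fun_prop
    · fun_prop
    · intro y hy
      have hd : HasDerivAt (fun x : ℝ => x * Real.cosh x - Real.sinh x)
          (1 * Real.cosh y + y * Real.sinh y - Real.cosh y) y := by
        exact ((hasDerivAt_id y).mul (Real.hasDerivAt_cosh y)).sub (Real.hasDerivAt_sinh y)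
      rw [hd.deriv]
      have hy' : 0 ≤ y := le_of_lt (by simpa using hy)
      have : 0 ≤ y * Real.sinh y := mul_nonneg hy' (Real.sinh_nonneg_iff.mpr hy')
      linarith
  have := key (Set.self_mem_Ici) (Set.mem_Ici.mpr hx) hx
  simp only [Real.sinh_zero, Real.cosh_zero, mul_one, zero_mul, sub_zero] at this
  linarith

/-- Determinant positivity estimate in the proof of Theorem 3.3. -/
theorem stmt_15 (σ α β : ℝ) (hσ : 0 < σ)
    (h1 : 0 ≤ Real.sin α * Real.sin β)
    (h2 : Real.cos α * Real.cos β - Real.sin (α - β) < 0)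
    (h3 : 0 ≤ Real.cos α * Real.cos β ∨ 0 ≤ Real.sin (α - β)) :
    0 < -(Real.cos α * Real.cos β) * Real.sinh σ +
        Real.sin (α - β) * σ * Real.cosh σ +
        Real.sin α * Real.sin β * σ ^ 2 * Real.sinh σ := by
  have hs : 0 ≤ Real.sin (α - β) := by
    rcases h3 with h | h
    · linarith
    · exact h
  have hsinh : 0 < Real.sinh σ := Real.sinh_pos_iff.mpr hσ
  have hle : Real.sinh σ ≤ σ * Real.cosh σ := sinh_le_mul_cosh hσ.le
  have h4 : Real.sin (α - β) * Real.sinh σ ≤ Real.sin (α - β) * (σ * Real.cosh σ) :=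
    mul_le_mul_of_nonneg_left hle hs
  have h5 : 0 ≤ Real.sin α * Real.sin β * σ ^ 2 * Real.sinh σ :=
    mul_nonneg (mul_nonneg h1 (sq_nonneg σ)) hsinh.le
  nlinarith [mul_pos (show (0:ℝ) < Real.sin (α-β) - Real.cos α * Real.cos β by linarith) hsinh]
end

section
/- Let α ∈ (π/4, π] and β ∈ [0, 3π/4) with cos α · cos β − sin(α − β) < 0. Let p : [0,1] → ℝ be continuous and strictly positive, let λ, ν ∈ ℝ, and let u, v : [0,1] → ℝ be twice continuously differentiable, strictly positive on (0,1), both satisfying BC(α,β), with −u''(x) = λ·p(x)·u(x) and −v''(x) = ν·v(x) for all x ∈ [0,1]. Then ν > 0 and λ > 0. -/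
/-!
If `l ≤ 0`, then `-u'' = l p u` with `p ≥ 0` and `u ≥ 0` makes `u` convex on `[0, 1]`, so
`u'(0) ≤ u(1) - u(0) ≤ u'(1)`. Feeding the boundary conditions into these two inequalities gives
`(sin α - cos α) u(0) ≤ sin α u(1)` and `(sin β + cos β) u(1) ≤ sin β u(0)`, and the angle
condition says precisely that these force `u(0) = u(1) = 0`. A convex function vanishing at both
endpoints is nonpositive in between, contradicting `u > 0` on `(0, 1)`. The case of `v` is the
case `p = 1`.
-/

open Real

open Set

lemma sin_add_cos_eq_sqrt_two_mul_sin (x : ℝ) : sin x + cos x = √2 * sin (x + π / 4) := by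
  rw [sin_add, cos_pi_div_four, sin_pi_div_four]
  have h : √2 * √2 = 2 := mul_self_sqrt zero_le_two
  linear_combination (-(sin x + cos x) / 2) * h

lemma sin_add_cos_pos {x : ℝ} (hx : x ∈ Ico 0 (3 * π / 4)) : 0 < sin x + cos x := by
  rw [sin_add_cos_eq_sqrt_two_mul_sin]
  exact mul_pos (by positivity) (sin_pos_of_pos_of_lt_pi (by linarith [hx.1, pi_pos])
    (by linarith [hx.2]))

lemma Continuous.nonneg_on_Icc_of_pos_on_Ioo {f : ℝ → ℝ} (hf : Continuous f) {a b : ℝ}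
    (hab : a < b) (hpos : ∀ x ∈ Ioo a b, 0 < f x) : ∀ x ∈ Icc a b, 0 ≤ f x := by
  intro x hx
  rw [← closure_Ioo hab.ne] at hx
  exact ContinuousWithinAt.closure_le hx continuousWithinAt_const hf.continuousWithinAt
    fun y hy => (hpos y hy).le

lemma convexOn_of_neg_deriv2_eq_mul {D : Set ℝ} (hD : Convex ℝ D) {u q : ℝ → ℝ}
    (hu : ContDiff ℝ 2 u) (hq : ∀ x ∈ D, q x ≤ 0) (hunonneg : ∀ x ∈ D, 0 ≤ u x)
    (hode : ∀ x ∈ D, -(deriv (deriv u) x) = q x * u x) : ConvexOn ℝ D u := by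
  have hu' : ContDiff ℝ 1 (deriv u) := ContDiff.deriv' (n := 1) hu
  refine convexOn_of_deriv2_nonneg' hD (hu.differentiable two_ne_zero).differentiableOn
    (hu'.differentiable one_ne_zero).differentiableOn fun x hx => ?_
  have hrhs := mul_nonpos_of_nonpos_of_nonneg (hq x hx) (hunonneg x hx)
  simp only [Function.iterate_succ, Function.iterate_zero, Function.comp_apply, id]
  linarith [hode x hx]

lemma BC.eq_zero_of_convexOn {α β : ℝ} (hsα : 0 ≤ sin α) (hsβ : 0 ≤ sin β)
    (hβ : 0 < sin β + cos β) (hcond : cos α * cos β - sin (α - β) < 0) {w : ℝ → ℝ}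
    (hbc : BC α β w) (hw : ConvexOn ℝ (Icc 0 1) w) (hd : Differentiable ℝ w)
    (hw0 : 0 ≤ w 0) (hw1 : 0 ≤ w 1) : w 0 = 0 ∧ w 1 = 0 := by
  have hmem0 : (0 : ℝ) ∈ Icc 0 1 := left_mem_Icc.mpr zero_le_one
  have hmem1 : (1 : ℝ) ∈ Icc 0 1 := right_mem_Icc.mpr zero_le_one
  have hslope : slope w 0 1 = w 1 - w 0 := by simp [slope_def_field]
  have hleft := hw.deriv_le_slope hmem0 hmem1 one_pos (hd 0)
  have hright := hw.slope_le_deriv hmem0 hmem1 one_pos (hd 1)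
  rw [hslope] at hleft hright
  obtain ⟨hbc0, hbc1⟩ := hbc
  have hA : (sin α - cos α) * w 0 ≤ sin α * w 1 := by
    nlinarith [mul_le_mul_of_nonneg_right hleft hsα]
  have hB : (sin β + cos β) * w 1 ≤ sin β * w 0 := by
    nlinarith [mul_le_mul_of_nonneg_right hright hsβ]
  -- chaining `hA` and `hB` gives `(sin α - cos α) (sin β + cos β) w 0 ≤ sin α sin β w 0`
  have hcoef : sin α * sin β < (sin α - cos α) * (sin β + cos β) := by
    rw [sin_sub] at hcond
    linarith
  have h0 : w 0 = 0 := by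
    nlinarith [mul_le_mul_of_nonneg_left hA hβ.le, mul_le_mul_of_nonneg_left hB hsα]
  refine ⟨h0, ?_⟩
  rw [h0, mul_zero] at hB
  nlinarith

theorem eigenvalue_pos_of_BC {α β : ℝ} (hα : α ∈ Icc 0 π) (hβ : β ∈ Ico 0 (3 * π / 4))
    (hcond : cos α * cos β - sin (α - β) < 0) {p : ℝ → ℝ} (hp : ∀ x ∈ Icc (0 : ℝ) 1, 0 ≤ p x)
    {l : ℝ} {u : ℝ → ℝ} (hu : ContDiff ℝ 2 u) (hupos : ∀ x ∈ Ioo (0 : ℝ) 1, 0 < u x)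
    (hbc : BC α β u) (hode : ∀ x ∈ Icc (0 : ℝ) 1, -(deriv (deriv u) x) = l * p x * u x) :
    0 < l := by
  by_contra! hl
  have hunonneg := hu.continuous.nonneg_on_Icc_of_pos_on_Ioo one_pos hupos
  have hconv : ConvexOn ℝ (Icc 0 1) u :=
    convexOn_of_neg_deriv2_eq_mul (convex_Icc 0 1) hu
      (fun x hx => mul_nonpos_of_nonpos_of_nonneg hl (hp x hx)) hunonneg hode
  obtain ⟨h0, h1⟩ := hbc.eq_zero_of_convexOn (sin_nonneg_of_nonneg_of_le_pi hα.1 hα.2)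
    (sin_nonneg_of_nonneg_of_le_pi hβ.1 (by linarith [hβ.2, pi_pos])) (sin_add_cos_pos hβ)
    hcond hconv (hu.differentiable two_ne_zero) (hunonneg 0 (by simp)) (hunonneg 1 (by simp))
  have hmid : u (1 / 2) ≤ 0 := by
    simpa [h0, h1] using hconv.2 (left_mem_Icc.mpr zero_le_one) (right_mem_Icc.mpr zero_le_one)
      (by norm_num : (0 : ℝ) ≤ 1 / 2) (by norm_num : (0 : ℝ) ≤ 1 / 2) (by norm_num)
  linarith [hupos (1 / 2) (by norm_num)]

theorem stmt_17_general (α β : ℝ)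
    (hα : α ∈ Set.Ioc (Real.pi / 4) Real.pi)
    (hβ : β ∈ Set.Ico (0:ℝ) (3 * Real.pi / 4))
    (hcond : Real.cos α * Real.cos β - Real.sin (α - β) < 0)
    (p : ℝ → ℝ)
    (hppos : ∀ x ∈ Set.Icc (0:ℝ) 1, 0 < p x)
    (l ν : ℝ) (u v : ℝ → ℝ)
    (hu : ContDiff ℝ 2 u) (hv : ContDiff ℝ 2 v)
    (hupos : ∀ x ∈ Set.Ioo (0:ℝ) 1, 0 < u x)
    (hvpos : ∀ x ∈ Set.Ioo (0:ℝ) 1, 0 < v x)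
    (hubc : BC α β u) (hvbc : BC α β v)
    (huode : ∀ x ∈ Set.Icc (0:ℝ) 1, -(deriv (deriv u) x) = l * p x * u x)
    (hvode : ∀ x ∈ Set.Icc (0:ℝ) 1, -(deriv (deriv v) x) = ν * v x) :
    0 < ν ∧ 0 < l := by
  have hα' : α ∈ Icc 0 π := ⟨by linarith [hα.1, pi_pos], hα.2⟩
  exact ⟨eigenvalue_pos_of_BC hα' hβ hcond (p := 1) (fun _ _ => zero_le_one) hv hvpos hvbc
      (fun x hx => by simpa using hvode x hx),
    eigenvalue_pos_of_BC hα' hβ hcond (fun x hx => (hppos x hx).le) hu hupos hubc huode⟩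

/-- Second assertion of Theorem 3.3: the lowest eigenvalue λ₀(p,α,β) is
strictly positive whenever cos α cos β − sin(α−β) < 0 on (π/4, π] × [0, 3π/4). -/
theorem stmt_17 (α β : ℝ)
    (hα : α ∈ Set.Ioc (Real.pi / 4) Real.pi)
    (hβ : β ∈ Set.Ico (0:ℝ) (3 * Real.pi / 4))
    (hcond : Real.cos α * Real.cos β - Real.sin (α - β) < 0)
    (p : ℝ → ℝ) (hp : Continuous p)
    (hppos : ∀ x ∈ Set.Icc (0:ℝ) 1, 0 < p x)
    (l ν : ℝ) (u v : ℝ → ℝ)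
    (hu : ContDiff ℝ 2 u) (hv : ContDiff ℝ 2 v)
    (hupos : ∀ x ∈ Set.Ioo (0:ℝ) 1, 0 < u x)
    (hvpos : ∀ x ∈ Set.Ioo (0:ℝ) 1, 0 < v x)
    (hubc : BC α β u) (hvbc : BC α β v)
    (huode : ∀ x ∈ Set.Icc (0:ℝ) 1, -(deriv (deriv u) x) = l * p x * u x)
    (hvode : ∀ x ∈ Set.Icc (0:ℝ) 1, -(deriv (deriv v) x) = ν * v x) :
    0 < ν ∧ 0 < l :=
  stmt_17_general α β hα hβ hcond p hppos l ν u v hu hv hupos hvpos hubc hvbc huode hvode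
end
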